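/- arXiv:1503.05121 — 2 statements merged into one kernel-verified Lean document; each statement's English description precedes it below -/
import Mathlib

section
/- If f: ℤ → ℂ is a function supported on a finite set and H > 0 is a real number, then ∫_𝕋 ( ∫_ℝ |∑_{x ≤ n ≤ x+H} f(n) e(αn)|² dx )² dα = ∑_{h ∈ ℤ, |h| ≤ H} (H − |h|)² · |∑_{n ∈ ℤ} f(n) · conj(f(n+h))|², where 𝕋 = ℝ/ℤ, the inner sums are over integers n, and for each α the inner dx-integral is over x ∈ ℝ. -/
/-!
Write the window sum as `∑ₙ 1_{[n-H, n]}(x) f(n) e(αn)` and expand its squared modulus: the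
`x`-integral becomes `∑_{n,m} |[n-H, n] ∩ [m-H, m]| f(n) conj(f(m)) e(α(n-m))`, and the overlap
length is `(H - |n-m|)₊`. Grouping by `h = n - m`, the inner integral is the trigonometric
polynomial `∑_{|h| ≤ H} (H - |h|) conj(c(h)) e(αh)` with `c(h) = ∑ₙ f(n) conj(f(n+h))`. Being
real, its square is its squared modulus, and Parseval on `[0, 1]` gives `∑_h (H - |h|)² |c(h)|²`.
-/

open Finset MeasureTheory

/-- The additive character `e(x) = e^{2πix}`. -/
noncomputable def eChar (x : ℝ) : ℂ := Complex.exp (2 * Real.pi * Complex.I * x)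

open ComplexConjugate

theorem eChar_mul_conj (x y : ℝ) : eChar x * conj (eChar y) = eChar (x - y) := by
  simp only [eChar, ← Complex.exp_conj, ← Complex.exp_add, map_mul, Complex.conj_I,
    Complex.conj_ofReal, map_ofNat, Complex.ofReal_sub]
  ring_nf

theorem continuous_eChar : Continuous eChar := by
  unfold eChar; fun_prop

theorem integral_eChar_mul_int (k : ℤ) :
    ∫ α in (0 : ℝ)..1, eChar (α * k) = if k = 0 then 1 else 0 := by
  split_ifs with hk
  · simp [hk, eChar]
  have hc : 2 * Real.pi * Complex.I * k ≠ 0 := by simp [Real.pi_ne_zero, hk]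
  have hexp : ∀ α : ℝ, eChar (α * k) = Complex.exp (2 * Real.pi * Complex.I * k * α) := by
    intro α; rw [eChar]; push_cast; ring_nf
  simp_rw [hexp, integral_exp_mul_complex hc, Complex.ofReal_one, Complex.ofReal_zero, mul_one,
    mul_zero, Complex.exp_zero, mul_comm _ (k : ℂ), Complex.exp_int_mul_two_pi_mul_I, sub_self,
    zero_div]

theorem integral_norm_sq_sum_eChar (T : Finset ℤ) (b : ℤ → ℂ) :
    ∫ α in (0 : ℝ)..1, ‖∑ h ∈ T, b h * eChar (α * h)‖ ^ 2 = ∑ h ∈ T, ‖b h‖ ^ 2 := by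
  have hsq : ∀ α : ℝ, ((‖∑ h ∈ T, b h * eChar (α * h)‖ ^ 2 : ℝ) : ℂ) =
      ∑ h ∈ T, ∑ k ∈ T, b h * conj (b k) * eChar (α * (h - k : ℤ)) := by
    intro α
    rw [Complex.ofReal_pow, ← Complex.mul_conj', map_sum, sum_mul_sum]
    refine sum_congr rfl fun h _ ↦ sum_congr rfl fun k _ ↦ ?_
    rw [map_mul, mul_mul_mul_comm, eChar_mul_conj, Int.cast_sub, mul_sub]
  have hcont : ∀ (c : ℂ) (k : ℤ), Continuous fun α : ℝ ↦ c * eChar (α * k) :=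
    fun c k ↦ continuous_const.mul (continuous_eChar.comp (by fun_prop))
  apply Complex.ofReal_injective
  rw [← intervalIntegral.integral_ofReal, Complex.ofReal_sum]
  simp_rw [hsq]
  rw [intervalIntegral.integral_finsetSum fun h _ ↦
    (continuous_finsetSum _ fun k _ ↦ hcont _ _).intervalIntegrable _ _]
  refine sum_congr rfl fun h hh ↦ ?_
  rw [intervalIntegral.integral_finsetSum fun k _ ↦ (hcont _ _).intervalIntegrable _ _]
  simp_rw [intervalIntegral.integral_const_mul, integral_eChar_mul_int, sub_eq_zero, mul_ite,
    mul_one, mul_zero, sum_ite_eq, if_pos hh, Complex.mul_conj', Complex.ofReal_pow]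

theorem Set.indicator_const_mul_conj_indicator_const {X : Type*} (A B : Set X) (a b : ℂ)
    (x : X) :
    A.indicator (fun _ ↦ a) x * conj (B.indicator (fun _ ↦ b) x) =
      (A ∩ B).indicator (fun _ ↦ a * conj b) x := by
  by_cases hA : x ∈ A <;> by_cases hB : x ∈ B <;> simp [hA, hB]

theorem integral_norm_sq_sum_indicator_const {X ι : Type*} [MeasurableSpace X] {μ : Measure X}
    {A : ι → Set X} (hA : ∀ i, MeasurableSet (A i)) (hμ : ∀ i, μ (A i) ≠ ⊤) (s : Finset ι)
    (z : ι → ℂ) :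
    ((∫ x, ‖∑ i ∈ s, (A i).indicator (fun _ ↦ z i) x‖ ^ 2 ∂μ : ℝ) : ℂ) =
      ∑ i ∈ s, ∑ j ∈ s, (μ.real (A i ∩ A j) : ℂ) * (z i * conj (z j)) := by
  have hint : ∀ i j, Integrable ((A i ∩ A j).indicator fun _ ↦ z i * conj (z j)) μ := fun i j ↦
    (integrable_indicator_iff ((hA i).inter (hA j))).2 <| integrableOn_const <|
      measure_ne_top_of_subset Set.inter_subset_left (hμ i)
  rw [← integral_complex_ofReal]
  simp_rw [Complex.ofReal_pow, ← Complex.mul_conj', map_sum, sum_mul_sum,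
    Set.indicator_const_mul_conj_indicator_const]
  rw [integral_finsetSum _ fun i _ ↦ integrable_finsetSum _ fun j _ ↦ hint i j]
  refine sum_congr rfl fun i _ ↦ ?_
  rw [integral_finsetSum _ fun j _ ↦ hint i j]
  refine sum_congr rfl fun j _ ↦ ?_
  rw [integral_indicator_const _ ((hA i).inter (hA j)), Complex.real_smul]

theorem volume_real_Icc_sub_inter_Icc_sub (H a b : ℝ) :
    volume.real (Set.Icc (a - H) a ∩ Set.Icc (b - H) b) = max (H - |a - b|) 0 := by
  rw [Set.Icc_inter_Icc, Real.volume_real_Icc, max_sub_sub_right, ← max_sub_min_eq_abs']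
  congr 1; ring

theorem Finset.sum_Icc_ceil_floor_eq_sum_indicator {M : Type*} [AddCommMonoid M] {G : ℤ → M}
    {s : Finset ℤ} (hs : Function.support G ⊆ s) (H x : ℝ) :
    ∑ n ∈ Icc ⌈x⌉ ⌊x + H⌋, G n =
      ∑ n ∈ s, (Set.Icc ((n : ℝ) - H) n).indicator (fun _ ↦ G n) x := by
  classical
  have hmem : ∀ n : ℤ, x ∈ Set.Icc ((n : ℝ) - H) n ↔ n ∈ Icc ⌈x⌉ ⌊x + H⌋ := by
    intro n
    rw [Set.mem_Icc, mem_Icc, Int.ceil_le, Int.le_floor, sub_le_iff_le_add, add_comm, and_comm]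
  simp_rw [Set.indicator_apply, hmem, sum_ite_mem]
  refine (sum_subset inter_subset_right fun n _ hn ↦ ?_).symm
  exact Function.notMem_support.1 fun hG ↦ hn (mem_inter.2 ⟨hs hG, ‹_›⟩)

theorem Finset.sum_eq_sum_shift {M : Type*} [AddCommMonoid M] {G : ℤ → M} {s t : Finset ℤ}
    (m : ℤ) (hs : Function.support G ⊆ s) (ht : ∀ h ∉ t, G (m + h) = 0) :
    ∑ n ∈ s, G n = ∑ h ∈ t, G (m + h) := by
  rw [← finsum_eq_sum_of_support_subset G hs,
    ← finsum_eq_sum_of_support_subset (fun h ↦ G (m + h)) fun h hh ↦ by_contra (hh <| ht h ·)]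
  exact (finsum_comp_equiv (Equiv.addLeft m)).symm

theorem Int.mem_Icc_neg_floor_floor_iff {H : ℝ} {h : ℤ} :
    h ∈ Icc (-⌊H⌋) ⌊H⌋ ↔ |(h : ℝ)| ≤ H := by
  rw [mem_Icc, ← abs_le, Int.le_floor, Int.cast_abs]

theorem integral_norm_sq_window_sum (f : ℤ → ℂ) {s : Finset ℤ} (hs : Function.support f ⊆ s)
    (H α : ℝ) :
    ((∫ x, ‖∑ n ∈ Icc ⌈x⌉ ⌊x + H⌋, f n * eChar (α * n)‖ ^ 2 : ℝ) : ℂ) =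
      ∑ h ∈ Icc (-⌊H⌋) ⌊H⌋,
        ((max (H - |(h : ℝ)|) 0 : ℝ) * ∑ m ∈ s, f (m + h) * conj (f m)) * eChar (α * h) := by
  have hsupp : Function.support (fun n ↦ f n * eChar (α * n)) ⊆ s :=
    (Function.support_mul_subset_left _ _).trans hs
  have hwindow := fun x ↦ sum_Icc_ceil_floor_eq_sum_indicator hsupp H x
  simp only [hwindow]
  rw [integral_norm_sq_sum_indicator_const (fun _ ↦ measurableSet_Icc)
    (fun _ ↦ measure_Icc_lt_top.ne), sum_comm]
  simp_rw [volume_real_Icc_sub_inter_Icc_sub, mul_sum, sum_mul]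
  rw [sum_comm (s := Icc (-⌊H⌋) ⌊H⌋)]
  refine sum_congr rfl fun m _ ↦ ?_
  rw [sum_eq_sum_shift m]
  · refine sum_congr rfl fun h _ ↦ ?_
    rw [map_mul, mul_mul_mul_comm, eChar_mul_conj]
    push_cast
    ring_nf
  · exact fun n hn ↦ hs <| left_ne_zero_of_mul <| left_ne_zero_of_mul <|
      right_ne_zero_of_mul (Function.mem_support.1 hn)
  · intro h hh
    rw [Int.mem_Icc_neg_floor_floor_iff, not_le] at hh
    push_cast
    rw [add_sub_cancel_left, max_eq_right (by linarith), Complex.ofReal_zero, zero_mul]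

theorem norm_finsum_mul_conj_add_eq (f : ℤ → ℂ) {s : Finset ℤ} (hs : Function.support f ⊆ s)
    (h : ℤ) : ‖∑ᶠ n, f n * conj (f (n + h))‖ = ‖∑ m ∈ s, f (m + h) * conj (f m)‖ := by
  rw [finsum_eq_sum_of_support_subset _ ((Function.support_mul_subset_left _ _).trans hs),
    ← Complex.norm_conj, map_sum]
  simp_rw [map_mul, Complex.conj_conj, mul_comm]

theorem fourier_identity_general (f : ℤ → ℂ) (hf : (Function.support f).Finite)
    (H : ℝ) :
    ∫ α in (0 : ℝ)..1,
        (∫ x : ℝ, ‖∑ n ∈ Finset.Icc ⌈x⌉ ⌊x + H⌋,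
            f n * eChar (α * n)‖ ^ 2) ^ 2
      = ∑ h ∈ Finset.Icc (-⌊H⌋) ⌊H⌋,
          (H - |(h : ℝ)|) ^ 2 *
            ‖∑ᶠ n : ℤ, f n * (starRingEnd ℂ) (f (n + h))‖ ^ 2 := by
  have hs : Function.support f ⊆ hf.toFinset := by simp
  calc _ = ∫ α in (0 : ℝ)..1, ‖∑ h ∈ Icc (-⌊H⌋) ⌊H⌋, ((max (H - |(h : ℝ)|) 0 : ℝ) *
          ∑ m ∈ hf.toFinset, f (m + h) * conj (f m)) * eChar (α * h)‖ ^ 2 := by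
        refine intervalIntegral.integral_congr fun α _ ↦ ?_
        rw [← integral_norm_sq_window_sum f hs, Complex.norm_real, Real.norm_eq_abs, sq_abs]
    _ = _ := by
        rw [integral_norm_sq_sum_eChar]
        refine sum_congr rfl fun h hh ↦ ?_
        rw [norm_mul, mul_pow, Complex.norm_real, Real.norm_eq_abs, sq_abs,
          max_eq_left (sub_nonneg.2 (Int.mem_Icc_neg_floor_floor_iff.1 hh)),
          norm_finsum_mul_conj_add_eq f hs]

/-- **Lemma 1.4** (Fourier identity): for finitely supported `f : ℤ → ℂ` and `H > 0`,
`∫_𝕋 (∫_ℝ |∑_{x ≤ n ≤ x+H} f(n) e(αn)|² dx)² dα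
  = ∑_{|h| ≤ H} (H-|h|)² |∑_n f(n) conj(f(n+h))|²`. -/
theorem fourier_identity (f : ℤ → ℂ) (hf : (Function.support f).Finite)
    (H : ℝ) (hH : 0 < H) :
    ∫ α in (0 : ℝ)..1,
        (∫ x : ℝ, ‖∑ n ∈ Finset.Icc ⌈x⌉ ⌊x + H⌋,
            f n * eChar (α * n)‖ ^ 2) ^ 2
      = ∑ h ∈ Finset.Icc (-⌊H⌋) ⌊H⌋,
          (H - |(h : ℝ)|) ^ 2 *
            ‖∑ᶠ n : ℤ, f n * (starRingEnd ℂ) (f (n + h))‖ ^ 2 :=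
  fourier_identity_general f hf H
end

section
/- For every Dirichlet character χ and every real number t, the series ∑_p (1 + Re(χ(p) p^{it}))/p over primes p diverges. Equivalently, M(λ; ∞, ∞) = ∞, i.e., the Liouville function λ does not pretend to be any twisted Dirichlet character n ↦ χ(n) n^{it}. -/
open Finset Filter

/-!
By the Euler product, `log ‖L(χ, s)‖ = Re ∑_p -log (1 - χ(p) p^{-s})` for `Re s > 1`, and this
differs from `Re ∑_p χ(p) p^{-s}` by at most `∑_p p^{-2}`. Unless `χ` is principal and `t = 0`,
`σ ↦ L(χ, σ - it)` is continuous and nonvanishing on `[1, 2]`, so `∑_p Re(χ(p) p^{it}) p^{-σ}`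
stays bounded as `σ → 1⁺`; in the remaining cases (and for modulus `0`) it is nonnegative.
On the other hand `∑_p p^{-σ}` is unbounded as `σ → 1⁺`, because `∑_p 1/p` diverges.
Since `0 ≤ 1 + Re(χ(p) p^{it})` and `p^{-σ} ≤ p^{-1}`, a convergent
`∑_p (1 + Re(χ(p) p^{it}))/p` would bound `∑_p p^{-σ} + ∑_p Re(χ(p) p^{it}) p^{-σ}` uniformly
in `σ`, which is impossible.
-/

open Complex Topology

lemma Complex.norm_neg_log_one_sub_sub_le {w : ℂ} (hw : ‖w‖ ≤ 1 / 2) :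
    ‖-log (1 - w) - w‖ ≤ ‖w‖ ^ 2 := by
  have hlt : ‖-w‖ < 1 := by rw [norm_neg]; linarith
  have hinv : (1 - ‖w‖)⁻¹ ≤ 2 := by
    rw [inv_le_comm₀ (by linarith) two_pos]; linarith
  calc ‖-log (1 - w) - w‖ = ‖log (1 + -w) - -w‖ := by
        rw [← norm_neg]; ring_nf
    _ ≤ ‖w‖ ^ 2 * (1 - ‖w‖)⁻¹ / 2 := by
        simpa only [norm_neg] using norm_log_one_add_sub_self_le hlt
    _ ≤ ‖w‖ ^ 2 * 2 / 2 := by gcongr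
    _ = ‖w‖ ^ 2 := by ring

lemma Complex.norm_tsum_neg_log_one_sub_sub_tsum_le {ι : Type*} {w : ι → ℂ} {b : ι → ℝ}
    (hw : Summable w) (hb : Summable b) (hw_half : ∀ i, ‖w i‖ ≤ 1 / 2)
    (hwb : ∀ i, ‖w i‖ ^ 2 ≤ b i) :
    ‖∑' i, -log (1 - w i) - ∑' i, w i‖ ≤ ∑' i, b i := by
  rw [← hw.clog_one_sub.neg.tsum_sub hw]
  exact tsum_of_norm_bounded hb.hasSum fun i ↦
    (norm_neg_log_one_sub_sub_le (hw_half i)).trans (hwb i)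

lemma Nat.Primes.exists_lt_tsum_rpow_neg (B : ℝ) :
    ∃ σ ∈ Set.Ioc (1 : ℝ) 2, B < ∑' p : Nat.Primes, (p : ℝ) ^ (-σ) := by
  obtain ⟨F, hF⟩ : ∃ F : Finset Nat.Primes, B < ∑ p ∈ F, (p : ℝ) ^ (-1 : ℝ) := by
    by_contra! hle
    exact Nat.Primes.not_summable_one_div <| by
      simpa [Real.rpow_neg_one] using summable_of_sum_le (fun p ↦ by positivity) hle
  have hcont : Continuous fun σ : ℝ ↦ ∑ p ∈ F, (p : ℝ) ^ (-σ) :=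
    continuous_finsetSum _ fun p _ ↦
      (Real.continuous_const_rpow (by exact_mod_cast p.prop.ne_zero)).comp continuous_neg
  have hev : ∀ᶠ σ in 𝓝[>] (1 : ℝ), B < ∑ p ∈ F, (p : ℝ) ^ (-σ) ∧ σ ∈ Set.Ioc 1 2 :=
    (((hcont.tendsto 1).mono_left nhdsWithin_le_nhds).eventually
      (eventually_gt_nhds hF)).and (Ioc_mem_nhdsGT one_lt_two)
  obtain ⟨σ, hσF, hσ⟩ := hev.exists
  exact ⟨σ, hσ, hσF.trans_le <| Summable.sum_le_tsum F (fun p _ ↦ by positivity)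
    (Nat.Primes.summable_rpow.mpr (by linarith [hσ.1]))⟩

lemma Nat.Primes.not_summable_one_add_div_of_le_tsum {a : Nat.Primes → ℝ}
    (ha : ∀ p, |a p| ≤ 1) {C : ℝ}
    (hC : ∀ σ ∈ Set.Ioc (1 : ℝ) 2, -C ≤ ∑' p, a p * (p : ℝ) ^ (-σ)) :
    ¬ Summable fun p : Nat.Primes ↦ (1 + a p) / p := by
  intro hS
  obtain ⟨σ, hσ, hlt⟩ := exists_lt_tsum_rpow_neg (∑' p : Nat.Primes, (1 + a p) / p + C)
  have h₁ : Summable fun p : Nat.Primes ↦ (p : ℝ) ^ (-σ) :=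
    Nat.Primes.summable_rpow.mpr (by linarith [hσ.1])
  have h₂ : Summable fun p : Nat.Primes ↦ a p * (p : ℝ) ^ (-σ) :=
    h₁.of_norm_bounded fun p ↦ by
      have hp : 0 ≤ (p : ℝ) ^ (-σ) := Real.rpow_nonneg (Nat.cast_nonneg _) _
      rw [norm_mul, Real.norm_of_nonneg hp]
      exact mul_le_of_le_one_left hp (ha p)
  have hle (p : Nat.Primes) : (p : ℝ) ^ (-σ) + a p * (p : ℝ) ^ (-σ) ≤ (1 + a p) / p := by
    rw [← one_add_mul, div_eq_mul_inv, ← Real.rpow_neg_one]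
    exact mul_le_mul_of_nonneg_left
      (Real.rpow_le_rpow_of_exponent_le (mod_cast p.prop.one_lt.le) (by linarith [hσ.1]))
      (by linarith [(abs_le.mp (ha p)).1])
  have hsum := (h₁.add h₂).tsum_le_tsum hle hS
  rw [h₁.tsum_add h₂] at hsum
  linarith [hC σ hσ]

lemma Nat.Primes.tendsto_sum_filter_prime_atTop {g : ℕ → ℝ} (hg : ∀ p, p.Prime → 0 ≤ g p)
    (h : ¬ Summable fun p : Nat.Primes ↦ g p) :
    Tendsto (fun N ↦ ∑ p ∈ (range N).filter Nat.Prime, g p) atTop atTop := by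
  have hind : ¬ Summable ({p | p.Prime}.indicator g) := summable_subtype_iff_indicator.not.mp h
  refine ((not_summable_iff_tendsto_nat_atTop_of_nonneg fun n ↦ ?_).mp hind).congr fun N ↦ ?_
  · exact Set.indicator_apply_nonneg (hg n)
  · simp [sum_filter, Set.indicator_apply]

namespace DirichletCharacter

variable {N : ℕ} (χ : DirichletCharacter ℂ N)

lemma norm_mul_natCast_cpow_le {n : ℕ} (hn : n ≠ 0) (s : ℂ) :
    ‖χ n * (n : ℂ) ^ s‖ ≤ (n : ℝ) ^ s.re := by
  rw [norm_mul, norm_natCast_cpow_of_pos (Nat.pos_of_ne_zero hn)]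
  exact mul_le_of_le_one_left (by positivity) (χ.norm_le_one _)

lemma abs_re_mul_natCast_cpow_I_mul_le_one {n : ℕ} (hn : n ≠ 0) (t : ℝ) :
    |(χ n * (n : ℂ) ^ (I * t)).re| ≤ 1 :=
  (abs_re_le_norm _).trans <| by simpa using χ.norm_mul_natCast_cpow_le hn (I * t)

lemma log_norm_LFunction_eq_re_tsum [NeZero N] {s : ℂ} (hs : 1 < s.re) :
    Real.log ‖LFunction χ s‖ = (∑' p : Nat.Primes, -log (1 - χ p * (p : ℂ) ^ (-s))).re := by
  rw [χ.LFunction_eq_LSeries hs, ← χ.LSeries_eulerProduct_exp_log hs, norm_exp, Real.log_exp]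

lemma exists_abs_log_norm_LFunction_le [NeZero N] {t : ℝ} (h : χ ≠ 1 ∨ t ≠ 0) :
    ∃ C, ∀ σ ∈ Set.Icc (1 : ℝ) 2, |Real.log ‖LFunction χ (σ - I * t)‖| ≤ C := by
  have hne (σ : ℝ) : (σ - I * t : ℂ) ≠ 1 ∨ χ ≠ 1 :=
    h.symm.imp_left fun ht heq ↦ ht <| by simpa using congrArg im heq
  have hcont : ContinuousOn (fun σ : ℝ ↦ Real.log ‖LFunction χ (σ - I * t)‖) (Set.Icc 1 2) :=
    fun σ hσ ↦ ContinuousAt.continuousWithinAt <|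
      ((χ.differentiableAt_LFunction _ (hne σ)).continuousAt.comp
        (f := fun σ : ℝ ↦ (σ - I * t : ℂ)) (by fun_prop)).norm.log <|
      norm_ne_zero_iff.mpr <| χ.LFunction_ne_zero_of_one_le_re (hne σ).symm (by simpa using hσ.1)
  obtain ⟨C, hC⟩ := isCompact_Icc.exists_bound_of_continuousOn hcont
  exact ⟨C, fun σ hσ ↦ by simpa only [Real.norm_eq_abs] using hC σ hσ⟩

lemma exists_abs_tsum_re_mul_cpow_I_mul_rpow_neg_le [NeZero N] {t : ℝ} (h : χ ≠ 1 ∨ t ≠ 0) :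
    ∃ C, ∀ σ ∈ Set.Ioc (1 : ℝ) 2,
      |∑' p : Nat.Primes, (χ p * (p : ℂ) ^ (I * t)).re * (p : ℝ) ^ (-σ)| ≤ C := by
  obtain ⟨C, hC⟩ := χ.exists_abs_log_norm_LFunction_le h
  refine ⟨C + ∑' p : Nat.Primes, (p : ℝ) ^ (-2 : ℝ), fun σ hσ ↦ ?_⟩
  set s : ℂ := σ - I * t
  have hs : 1 < s.re := by simpa [s] using hσ.1
  have hs' : (-s).re = -σ := by simp [s]
  set w : Nat.Primes → ℂ := fun p ↦ χ p * (p : ℂ) ^ (-s)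
  have hw_le p : ‖w p‖ ≤ (p : ℝ)⁻¹ := by
    refine (χ.norm_mul_natCast_cpow_le p.prop.ne_zero (-s)).trans ?_
    rw [hs', ← Real.rpow_neg_one]
    exact Real.rpow_le_rpow_of_exponent_le (mod_cast p.prop.one_lt.le) (by linarith [hσ.1])
  have hw_half p : ‖w p‖ ≤ 1 / 2 :=
    (hw_le p).trans <| by rw [one_div]; exact inv_anti₀ two_pos (mod_cast p.prop.two_le)
  have hw_sq p : ‖w p‖ ^ 2 ≤ (p : ℝ) ^ (-2 : ℝ) := by
    rw [Real.rpow_neg (by positivity), Real.rpow_two, ← inv_pow]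
    gcongr
    exact hw_le p
  have hw : Summable w := Summable.of_norm <|
    (Nat.Primes.summable_rpow.mpr (by rw [hs']; linarith [hσ.1])).of_nonneg_of_le
      (fun _ ↦ norm_nonneg _) fun p ↦ χ.norm_mul_natCast_cpow_le p.prop.ne_zero (-s)
  have hre (p : Nat.Primes) : (χ p * (p : ℂ) ^ (I * t)).re * (p : ℝ) ^ (-σ) = (w p).re := by
    have hp : (p : ℂ) ≠ 0 := mod_cast p.prop.ne_zero
    rw [← re_mul_ofReal, ofReal_cpow (p : ℕ).cast_nonneg]
    push_cast
    rw [mul_assoc, ← cpow_add _ _ hp]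
    simp only [w, s]
    ring_nf
  have herr := norm_tsum_neg_log_one_sub_sub_tsum_le hw
    (Nat.Primes.summable_rpow.mpr (by norm_num)) hw_half hw_sq
  have hsum_re : ∑' p : Nat.Primes, (χ p * (p : ℂ) ^ (I * t)).re * (p : ℝ) ^ (-σ)
      = Real.log ‖LFunction χ s‖ - (∑' p, -log (1 - w p) - ∑' p, w p).re := by
    rw [tsum_congr hre, ← re_tsum hw, χ.log_norm_LFunction_eq_re_tsum hs, sub_re, sub_sub_cancel]
  rw [hsum_re]
  exact (abs_sub _ _).trans <|
    add_le_add (hC σ ⟨hσ.1.le, hσ.2⟩) ((abs_re_le_norm _).trans herr)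

lemma exists_neg_le_tsum_re_mul_cpow_I_mul_rpow_neg (t : ℝ) :
    ∃ C, ∀ σ ∈ Set.Ioc (1 : ℝ) 2,
      -C ≤ ∑' p : Nat.Primes, (χ p * (p : ℂ) ^ (I * t)).re * (p : ℝ) ^ (-σ) := by
  by_cases h : N ≠ 0 ∧ (χ ≠ 1 ∨ t ≠ 0)
  · have : NeZero N := ⟨h.1⟩
    obtain ⟨C, hC⟩ := χ.exists_abs_tsum_re_mul_cpow_I_mul_rpow_neg_le h.2
    exact ⟨C, fun σ hσ ↦ (abs_le.mp (hC σ hσ)).1⟩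
  -- at primes, `χ p * p ^ (I * t)` is now `0` or `1`
  refine ⟨0, fun σ _ ↦ ?_⟩
  rw [neg_zero]
  refine tsum_nonneg fun p ↦ mul_nonneg ?_ (by positivity)
  rcases not_and_or.mp h with hN | hχt
  · obtain rfl : N = 0 := not_not.mp hN
    have hp : ¬ IsUnit ((p : ℕ) : ZMod 0) := by
      rw [ZMod.isUnit_iff_coprime, Nat.coprime_zero_right]; exact p.prop.ne_one
    simp [χ.map_nonunit hp]
  · obtain ⟨rfl, rfl⟩ : χ = 1 ∧ t = 0 := by tauto
    by_cases hu : IsUnit ((p : ℕ) : ZMod N)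
    · simp [MulChar.one_apply hu]
    · simp [MulChar.map_nonunit _ hu]

end DirichletCharacter

/-- The Liouville function does not pretend to be any twisted Dirichlet character
`n ↦ χ(n) n^{it}`: for every Dirichlet character `χ` and every real `t`, the series
`∑_p (1 + Re(χ(p) p^{it}))/p` over primes diverges, i.e. `M(λ; ∞, ∞) = ∞`. -/
theorem liouville_not_pretentious (q : ℕ) (χ : DirichletCharacter ℂ q) (t : ℝ) :
    Tendsto (fun N : ℕ => ∑ p ∈ (Finset.range N).filter Nat.Prime,
        (1 + (χ (p : ZMod q) * (p : ℂ) ^ (Complex.I * t)).re) / p)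
      atTop atTop := by
  have ha {p : ℕ} (hp : p ≠ 0) := χ.abs_re_mul_natCast_cpow_I_mul_le_one hp t
  refine Nat.Primes.tendsto_sum_filter_prime_atTop (fun p hp ↦
    div_nonneg (by linarith [(abs_le.mp (ha hp.ne_zero)).1]) p.cast_nonneg) ?_
  obtain ⟨C, hC⟩ := χ.exists_neg_le_tsum_re_mul_cpow_I_mul_rpow_neg t
  exact Nat.Primes.not_summable_one_add_div_of_le_tsum (fun p ↦ ha p.prop.ne_zero) hC
end
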